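/- Let p be a prime, R = ℤ_p[[X, Y]] the formal power series ring in two variables over ℤ_p, and π : R → ℤ_p[[Y]] the ℤ_p-algebra homomorphism given by setting X = 0. Let f, g ∈ R. Suppose g ∈ (f) (i.e., f divides g in R), π(g) ≠ 0, and π(f) ∈ (π(g)) in ℤ_p[[Y]]. Then (f) = (g) as ideals of R. -/

import Mathlib

open PowerSeries

/-! Write `g = f * h`. In the domain `ℤ_p[[Y]]`, `π f` and `π g` divide each other and `π g ≠ 0`, so
they are associated and `π h` is a unit; `π` is the constant coefficient in `X`, so `h` is a unit. -/

instance PowerSeries.isLocalHom_constantCoeff {R : Type*} [CommRing R] :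
    IsLocalHom (constantCoeff (R := R)) :=
  ⟨fun _ ↦ isUnit_iff_constantCoeff.mpr⟩

theorem associated_of_dvd_of_map_dvd {R S : Type*} [CommRing R] [CommRing S] [IsDomain S]
    (φ : R →+* S) [IsLocalHom φ] {f g : R} (hfg : f ∣ g) (hg : φ g ≠ 0) (hgf : φ g ∣ φ f) :
    Associated f g := by
  obtain ⟨h, rfl⟩ := hfg
  rw [map_mul] at hg hgf
  have hassoc : Associated (φ f * φ h) (φ f) :=
    associated_of_dvd_dvd hgf (dvd_mul_right _ _)
  have hunit : IsUnit h :=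
    (isUnit_map_iff φ h).mp (isUnit_of_associated_mul hassoc (left_ne_zero_of_mul hg))
  exact associated_mul_unit_right f h hunit

/-- Let `p` be a prime and `R = ℤ_p[[X, Y]]`, realized as the power series
ring in the variable `X` over `ℤ_p[[Y]]`, and let `π : R → ℤ_p[[Y]]` be the
`ℤ_p`-algebra homomorphism setting `X = 0` (the constant coefficient in `X`).
Let `f, g ∈ R` with `g ∈ (f)`, `π(g) ≠ 0` and `π(f) ∈ (π(g))` in `ℤ_p[[Y]]`.
Then `(f) = (g)` as ideals of `R`. -/
theorem span_eq_of_dvd_and_specialization_dvd (p : ℕ) [Fact p.Prime]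
    (f g : PowerSeries (PowerSeries ℤ_[p]))
    (hfg : g ∈ Ideal.span {f})
    (hg0 : constantCoeff (R := PowerSeries ℤ_[p]) g ≠ 0)
    (hgf : constantCoeff (R := PowerSeries ℤ_[p]) f ∈
      Ideal.span {constantCoeff (R := PowerSeries ℤ_[p]) g}) :
    Ideal.span {f} = Ideal.span {g} :=
  Ideal.span_singleton_eq_span_singleton.mpr <|
    associated_of_dvd_of_map_dvd constantCoeff (Ideal.mem_span_singleton.mp hfg) hg0
      (Ideal.mem_span_singleton.mp hgf)
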